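/- The Paley graph P(17) on the field of 17 elements is 1-geodesic transitive but not 2-geodesic transitive: Aut(P(17)) acts transitively on the vertices and on the ordered pairs of adjacent vertices of P(17), but there exist two 2-geodesics of P(17) that are not mapped to one another by any automorphism of P(17). -/

import Mathlib

open SimpleGraph

def paleyGraph (F : Type*) [Field F] [Fintype F] (h : Fintype.card F % 4 = 1) :
    SimpleGraph F where
  Adj u v := u ≠ v ∧ ∃ s : F, u - v = s ^ 2
  symm := by
    constructor
    rintro u v ⟨huv, s, hs⟩
    refine ⟨huv.symm, ?_⟩
    obtain ⟨i, hi⟩ : IsSquare (-1 : F) :=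
      (FiniteField.isSquare_neg_one_iff).2 (by omega)
    exact ⟨i * s, by linear_combination -hs + s ^ 2 * hi⟩
  loopless := ⟨fun u h => h.1 rfl⟩

variable {V : Type*}

def SimpleGraph.autGroup (Γ : SimpleGraph V) : Subgroup (Equiv.Perm V) where
  carrier := {f | ∀ u v : V, Γ.Adj (f u) (f v) ↔ Γ.Adj u v}
  one_mem' := by intro u v; simp
  mul_mem' := by
    intro f g hf hg u v
    simp only [Equiv.Perm.mul_apply]
    rw [hf, hg]
  inv_mem' := by
    intro f hf u v
    have h := hf (f⁻¹ u) (f⁻¹ v)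
    simpa using h.symm

instance : Fact (Nat.Prime 17) := ⟨by norm_num⟩

def paley17 : SimpleGraph (ZMod 17) := paleyGraph (ZMod 17) (by rw [ZMod.card])

/-!
The affine maps `x ↦ r² x + d` are automorphisms of every Paley graph, and they already act
transitively on vertices and on arcs. For `P(17)`, the automorphism invariant that separates two
`2`-geodesics `(u₀, u₁, u₂)` is the number of common neighbours of `{u₀, u₁, u₂}`: the
geodesic `(0, 1, 3)` has two of them (`2` and `16`), while `(0, 1, 5)` has only `9`.
-/

namespace SimpleGraph

variable (G : SimpleGraph V)

lemma dist_eq_two_of_adj_of_adj {u v w : V} (huv : G.Adj u v) (hvw : G.Adj v w) (hne : u ≠ w)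
    (hnadj : ¬ G.Adj u w) : G.dist u w = 2 := by
  rw [dist, ENat.toNat_eq_iff two_ne_zero, Nat.cast_ofNat, edist_eq_two_iff]
  exact ⟨hne, hnadj, v, huv, hvw.symm⟩

def commonNeighborsOf (s : Set V) : Set V := {w | ∀ u ∈ s, G.Adj w u}

variable {G}

lemma image_commonNeighborsOf {g : Equiv.Perm V} (hg : g ∈ G.autGroup) (s : Set V) :
    g '' G.commonNeighborsOf s = G.commonNeighborsOf (g '' s) := by
  ext w
  obtain ⟨w, rfl⟩ := g.surjective w
  simp only [g.injective.mem_set_image, commonNeighborsOf, Set.mem_ofPred_eq, Set.forall_mem_image]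
  exact forall₂_congr fun u _ => (hg w u).symm

lemma ncard_commonNeighborsOf_image {g : Equiv.Perm V} (hg : g ∈ G.autGroup) (s : Set V) :
    (G.commonNeighborsOf (g '' s)).ncard = (G.commonNeighborsOf s).ncard := by
  rw [← image_commonNeighborsOf hg, Set.ncard_image_of_injective _ g.injective]

end SimpleGraph

section Paley

variable {F : Type*} [Field F]

def squareAffinePerm (r : F) (hr : r ≠ 0) (d : F) : Equiv.Perm F :=
  (Equiv.mulLeft₀ (r ^ 2) (pow_ne_zero 2 hr)).trans (Equiv.addRight d)

@[simp]
lemma squareAffinePerm_apply (r : F) (hr : r ≠ 0) (d x : F) :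
    squareAffinePerm r hr d x = r ^ 2 * x + d :=
  rfl

variable [Fintype F] {h : Fintype.card F % 4 = 1}

lemma paleyGraph_adj {u v : F} : (paleyGraph F h).Adj u v ↔ u ≠ v ∧ ∃ s : F, u - v = s ^ 2 :=
  Iff.rfl

lemma exists_ne_zero_sq_of_paleyGraph_adj {u v : F} (huv : (paleyGraph F h).Adj u v) :
    ∃ s ≠ 0, u - v = s ^ 2 := by
  obtain ⟨hne, s, hs⟩ := huv
  refine ⟨s, ?_, hs⟩
  rintro rfl
  exact hne (sub_eq_zero.mp (by simpa using hs))

lemma squareAffinePerm_mem_autGroup (r : F) (hr : r ≠ 0) (d : F) :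
    squareAffinePerm r hr d ∈ (paleyGraph F h).autGroup := by
  intro u v
  simp only [paleyGraph_adj, squareAffinePerm_apply, ne_eq, add_left_inj,
    mul_right_inj' (pow_ne_zero 2 hr), add_sub_add_right_eq_sub, ← mul_sub]
  refine and_congr_right fun _ => ⟨fun ⟨s, hs⟩ => ⟨s / r, ?_⟩, fun ⟨s, hs⟩ => ⟨r * s, ?_⟩⟩
  · field_simp
    linear_combination hs
  · rw [hs]
    ring

lemma paleyGraph_exists_aut_apply_eq (u v : F) :
    ∃ g ∈ (paleyGraph F h).autGroup, g u = v :=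
  ⟨squareAffinePerm 1 one_ne_zero (v - u), squareAffinePerm_mem_autGroup _ _ _, by simp⟩

lemma paleyGraph_exists_aut_apply_eq_of_adj {u₀ u₁ v₀ v₁ : F} (hu : (paleyGraph F h).Adj u₀ u₁)
    (hv : (paleyGraph F h).Adj v₀ v₁) :
    ∃ g ∈ (paleyGraph F h).autGroup, g u₀ = v₀ ∧ g u₁ = v₁ := by
  obtain ⟨s, hs0, hs⟩ := exists_ne_zero_sq_of_paleyGraph_adj hu
  obtain ⟨t, ht0, ht⟩ := exists_ne_zero_sq_of_paleyGraph_adj hv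
  have hr : t / s ≠ 0 := div_ne_zero ht0 hs0
  refine ⟨squareAffinePerm (t / s) hr (v₀ - (t / s) ^ 2 * u₀),
    squareAffinePerm_mem_autGroup _ _ _, by simp, ?_⟩
  have hscale : (t / s) ^ 2 * (u₀ - u₁) = t ^ 2 := by
    rw [hs]
    field_simp
  simp only [squareAffinePerm_apply]
  linear_combination ht - hscale

end Paley

instance : DecidableRel paley17.Adj := fun _ _ => decidable_of_iff _ paleyGraph_adj.symm

lemma paley17_commonNeighborsOf_013 : paley17.commonNeighborsOf {0, 1, 3} = {2, 16} := by
  ext w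
  simp only [commonNeighborsOf, Set.mem_insert_iff, Set.mem_singleton_iff, Set.mem_ofPred_eq,
    forall_eq_or_imp, forall_eq]
  revert w
  decide

lemma paley17_commonNeighborsOf_015 : paley17.commonNeighborsOf {0, 1, 5} = {9} := by
  ext w
  simp only [commonNeighborsOf, Set.mem_insert_iff, Set.mem_singleton_iff, Set.mem_ofPred_eq,
    forall_eq_or_imp, forall_eq]
  revert w
  decide

/-- The Paley graph `P(17)` is `1`-geodesic transitive but not
`2`-geodesic transitive: its automorphism group is transitive on vertices and on
ordered pairs of adjacent vertices, but some two `2`-geodesics are not equivalent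
under any automorphism. -/
theorem paley17_one_geodesic_transitive_not_two :
    (∀ u v : ZMod 17, ∃ g ∈ paley17.autGroup, g u = v) ∧
    (∀ u₀ u₁ v₀ v₁ : ZMod 17, paley17.Adj u₀ u₁ → paley17.Adj v₀ v₁ →
      ∃ g ∈ paley17.autGroup, g u₀ = v₀ ∧ g u₁ = v₁) ∧
    ∃ u₀ u₁ u₂ v₀ v₁ v₂ : ZMod 17,
      (paley17.Adj u₀ u₁ ∧ paley17.Adj u₁ u₂ ∧ paley17.dist u₀ u₂ = 2) ∧
      (paley17.Adj v₀ v₁ ∧ paley17.Adj v₁ v₂ ∧ paley17.dist v₀ v₂ = 2) ∧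
      ∀ g ∈ paley17.autGroup, ¬ (g u₀ = v₀ ∧ g u₁ = v₁ ∧ g u₂ = v₂) := by
  refine ⟨paleyGraph_exists_aut_apply_eq, fun _ _ _ _ => paleyGraph_exists_aut_apply_eq_of_adj,
    0, 1, 3, 0, 1, 5, ?_, ?_, ?_⟩
  · exact ⟨by decide, by decide,
      dist_eq_two_of_adj_of_adj _ (v := 1) (by decide) (by decide) (by decide) (by decide)⟩
  · exact ⟨by decide, by decide,
      dist_eq_two_of_adj_of_adj _ (v := 1) (by decide) (by decide) (by decide) (by decide)⟩
  · rintro g hg ⟨h0, h1, h3⟩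
    have hcard := ncard_commonNeighborsOf_image hg {0, 1, 3}
    rw [Set.image_insert_eq, Set.image_insert_eq, Set.image_singleton, h0, h1, h3,
      paley17_commonNeighborsOf_015, paley17_commonNeighborsOf_013, Set.ncard_singleton,
      Set.ncard_pair (by decide)] at hcard
    omega
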